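/- Let ξ₀(s) = ∫₀¹ ((1−x)/(1+x))·s·x^{s−1} dx for s > 0. Then for every s > 0, (1 − ξ₀(s))·ξ₀(s) + s·ξ₀′(s) < 0. Consequently, the function ξ₃(s) := (1 − ξ₀(s))/(2s·ξ₀(s)) is strictly increasing on (0,∞). -/

import Mathlib

/-!
Integrating by parts, `ξ₀ s = ∫₀¹ w` with the weight `w x = 2 xˢ / (1 + x)²`, while
`1 - ξ₀ s = 2 s A s` with `A s = ∫₀¹ xˢ / (1 + x)` (`invOneAddMoment`). Differentiating both
under the integral sign gives `ξ₀' = ∫₀¹ log x · w` and `ξ₀' = -2 A - 2 s A'`, and with these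
`(1 - ξ₀) ξ₀ + s ξ₀' = -2 s² (A' ξ₀ - A ξ₀')`. Since `2 A = ∫₀¹ (1 + x) w` and
`2 A' = ∫₀¹ log x (1 + x) w`, the bracket is half the `w`-covariance of the increasing functions
`log x` and `1 + x`, which is positive by Chebyshev's integral inequality. Finally
`ξ₃' = -2 ((1 - ξ₀) ξ₀ + s ξ₀') / (2 s ξ₀)²`.
-/

open MeasureTheory Real Set

noncomputable def ξ₀ (s : ℝ) : ℝ :=
  ∫ x in (0:ℝ)..1, ((1 - x) / (1 + x)) * (s * x ^ (s - 1))

noncomputable def ξ₀' (s : ℝ) : ℝ :=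
  ∫ x in (0:ℝ)..1, 2 * x ^ s * Real.log x / (1 + x) ^ 2

noncomputable def ξ₃ (s : ℝ) : ℝ := (1 - ξ₀ s) / (2 * s * ξ₀ s)

section Chebyshev

variable {α : Type*} {u v w : α → ℝ}

def chebyshevKernel (u v w : α → ℝ) (p : α × α) : ℝ :=
  (u p.1 - u p.2) * (v p.1 - v p.2) * (w p.1 * w p.2)

lemma chebyshevKernel_eq : chebyshevKernel u v w = fun p ↦
    (u p.1 * v p.1 * w p.1 * w p.2 + w p.1 * (u p.2 * v p.2 * w p.2)) -
      (u p.1 * w p.1 * (v p.2 * w p.2) + v p.1 * w p.1 * (u p.2 * w p.2)) := by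
  funext p
  simp only [chebyshevKernel]
  ring

variable [MeasurableSpace α] {μ : Measure α}

lemma integrable_chebyshevKernel (hw : Integrable w μ) (huw : Integrable (fun x ↦ u x * w x) μ)
    (hvw : Integrable (fun x ↦ v x * w x) μ) (huvw : Integrable (fun x ↦ u x * v x * w x) μ) :
    Integrable (chebyshevKernel u v w) (μ.prod μ) := by
  rw [chebyshevKernel_eq]
  exact ((huvw.mul_prod hw).add (hw.mul_prod huvw)).sub
    ((huw.mul_prod hvw).add (hvw.mul_prod huw))

variable [SFinite μ]

lemma integral_chebyshevKernel (hw : Integrable w μ) (huw : Integrable (fun x ↦ u x * w x) μ)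
    (hvw : Integrable (fun x ↦ v x * w x) μ) (huvw : Integrable (fun x ↦ u x * v x * w x) μ) :
    ∫ p, chebyshevKernel u v w p ∂μ.prod μ =
      2 * ((∫ x, u x * v x * w x ∂μ) * (∫ x, w x ∂μ) -
        (∫ x, u x * w x ∂μ) * ∫ x, v x * w x ∂μ) := by
  have h₁ := huvw.mul_prod hw
  have h₂ := hw.mul_prod huvw
  have h₃ := huw.mul_prod hvw
  have h₄ := hvw.mul_prod huw
  simp only [chebyshevKernel_eq]
  rw [integral_sub, integral_add h₁ h₂, integral_add h₃ h₄,
    integral_prod_mul (fun x ↦ u x * v x * w x) w, integral_prod_mul w (fun x ↦ u x * v x * w x),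
    integral_prod_mul (fun x ↦ u x * w x) (fun x ↦ v x * w x),
    integral_prod_mul (fun x ↦ v x * w x) (fun x ↦ u x * w x)]
  · ring
  exacts [h₁.add h₂, h₃.add h₄]

/-- Chebyshev's integral inequality, strict form. -/
theorem integral_mul_integral_lt_of_chebyshevKernel (hw : Integrable w μ)
    (huw : Integrable (fun x ↦ u x * w x) μ) (hvw : Integrable (fun x ↦ v x * w x) μ)
    (huvw : Integrable (fun x ↦ u x * v x * w x) μ)
    (hnonneg : 0 ≤ᵐ[μ.prod μ] chebyshevKernel u v w)
    (hpos : 0 < μ.prod μ (Function.support (chebyshevKernel u v w))) :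
    (∫ x, u x * w x ∂μ) * (∫ x, v x * w x ∂μ) < (∫ x, u x * v x * w x ∂μ) * ∫ x, w x ∂μ := by
  have := (integral_pos_iff_support_of_nonneg_ae hnonneg
    (integrable_chebyshevKernel hw huw hvw huvw)).2 hpos
  linarith [integral_chebyshevKernel hw huw hvw huvw]

end Chebyshev

section RpowMoments

lemma rpow_mul_abs_log_le {x r t δ : ℝ} (hx₀ : 0 < x) (hx₁ : x ≤ 1) (hδ : 0 < δ) (hrt : r ≤ t) :
    x ^ t * |log x| ≤ x ^ (r - δ) / δ := by
  have hlog : x ^ δ * |log x| ≤ 1 / δ := by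
    simpa [abs_mul, abs_of_pos (rpow_pos_of_pos hx₀ δ), mul_comm] using
      (abs_log_mul_self_rpow_lt x δ hx₀ hx₁ hδ).le
  calc x ^ t * |log x| ≤ x ^ r * |log x| :=
        mul_le_mul_of_nonneg_right (rpow_le_rpow_of_exponent_ge hx₀ hx₁ hrt) (abs_nonneg _)
    _ = x ^ (r - δ) * (x ^ δ * |log x|) := by rw [← mul_assoc, ← rpow_add hx₀, sub_add_cancel]
    _ ≤ x ^ (r - δ) * (1 / δ) := by gcongr
    _ = x ^ (r - δ) / δ := by ring

variable {h : ℝ → ℝ} {s : ℝ}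

lemma intervalIntegrable_rpow_mul_log (hs : -1 < s) :
    IntervalIntegrable (fun x ↦ x ^ s * log x) volume 0 1 := by
  obtain ⟨δ, hδ, hsδ⟩ : ∃ δ, 0 < δ ∧ -1 < s - δ := ⟨(s + 1) / 2, by linarith, by linarith⟩
  have hbound : IntervalIntegrable (fun x ↦ x ^ (s - δ) / δ) volume 0 1 :=
    (intervalIntegral.intervalIntegrable_rpow' hsδ).div_const δ
  refine hbound.mono_fun ?_ ?_
  · exact ((measurable_id.pow_const s).mul measurable_log).aestronglyMeasurable
  · rw [Filter.EventuallyLE, ae_restrict_iff' measurableSet_uIoc]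
    refine Filter.Eventually.of_forall fun x hx ↦ ?_
    rw [uIoc_of_le zero_le_one] at hx
    rw [norm_mul, norm_of_nonneg (rpow_nonneg hx.1.le _), norm_eq_abs]
    exact (rpow_mul_abs_log_le hx.1 hx.2 hδ le_rfl).trans (le_norm_self _)

lemma intervalIntegrable_rpow_mul (hh : ContinuousOn h (Icc 0 1)) (hs : -1 < s) :
    IntervalIntegrable (fun x ↦ x ^ s * h x) volume 0 1 :=
  (intervalIntegral.intervalIntegrable_rpow' hs).mul_continuousOn (by rwa [uIcc_of_le zero_le_one])

lemma intervalIntegrable_rpow_mul_log_mul (hh : ContinuousOn h (Icc 0 1)) (hs : -1 < s) :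
    IntervalIntegrable (fun x ↦ x ^ s * log x * h x) volume 0 1 :=
  (intervalIntegrable_rpow_mul_log hs).mul_continuousOn (by rwa [uIcc_of_le zero_le_one])

theorem hasDerivAt_integral_rpow_mul (hh : ContinuousOn h (Icc 0 1)) (hs : -1 < s) :
    HasDerivAt (fun t ↦ ∫ x in (0:ℝ)..1, x ^ t * h x)
      (∫ x in (0:ℝ)..1, x ^ s * log x * h x) s := by
  obtain ⟨C, hC⟩ := isCompact_Icc.exists_bound_of_continuousOn hh
  obtain ⟨δ, hδ, hsδ⟩ : ∃ δ, 0 < δ ∧ -1 < s - δ - δ := ⟨(s + 1) / 3, by linarith, by linarith⟩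
  have hball : ∀ t ∈ Metric.ball s δ, s - δ ≤ t := fun t ht ↦ by
    rw [Metric.mem_ball, dist_eq_norm] at ht
    linarith [neg_abs_le (t - s), norm_eq_abs (t - s)]
  refine (intervalIntegral.hasDerivAt_integral_of_dominated_loc_of_deriv_le
    (F := fun t x ↦ x ^ t * h x) (F' := fun t x ↦ x ^ t * log x * h x)
    (bound := fun x ↦ C * (x ^ (s - δ - δ) / δ)) (Metric.ball_mem_nhds s hδ) ?_
    (intervalIntegrable_rpow_mul hh hs) ?_ ?_ ?_ ?_).2
  · refine Filter.eventually_of_mem (Metric.ball_mem_nhds s hδ) fun t ht ↦ ?_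
    have ht' : -1 < t := by linarith [hball t ht]
    exact (intervalIntegrable_rpow_mul hh ht').def'.aestronglyMeasurable
  · exact (intervalIntegrable_rpow_mul_log_mul hh hs).def'.aestronglyMeasurable
  · refine Filter.Eventually.of_forall fun x hx t ht ↦ ?_
    rw [uIoc_of_le zero_le_one] at hx
    rw [norm_mul, norm_mul, norm_of_nonneg (rpow_nonneg hx.1.le _), norm_eq_abs, mul_comm]
    have hCx := hC x (Ioc_subset_Icc_self hx)
    exact mul_le_mul hCx (rpow_mul_abs_log_le hx.1 hx.2 hδ (hball t ht))
      (mul_nonneg (rpow_nonneg hx.1.le _) (abs_nonneg _))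
      ((norm_nonneg _).trans hCx)
  · exact ((intervalIntegral.intervalIntegrable_rpow' hsδ).div_const δ).const_mul C
  · refine Filter.Eventually.of_forall fun x hx t _ ↦ ?_
    rw [uIoc_of_le zero_le_one] at hx
    exact (hasStrictDerivAt_const_rpow hx.1 t).hasDerivAt.mul_const (h x)

end RpowMoments

section LogKernel

variable {v w : ℝ → ℝ}

lemma sub_log_mul_sub_pos (hv : StrictMono v) {x y : ℝ} (hx : 0 < x) (hy : 0 < y) (hxy : x ≠ y) :
    0 < (log x - log y) * (v x - v y) := by
  rcases hxy.lt_or_gt with h | h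
  · exact mul_pos_of_neg_of_neg (sub_neg.2 (log_lt_log hx h)) (sub_neg.2 (hv h))
  · exact mul_pos (sub_pos.2 (log_lt_log hy h)) (sub_pos.2 (hv h))

lemma sub_log_mul_sub_nonneg (hv : Monotone v) {x y : ℝ} (hx : 0 < x) (hy : 0 < y) :
    0 ≤ (log x - log y) * (v x - v y) := by
  rcases le_total x y with h | h
  · exact mul_nonneg_of_nonpos_of_nonpos (sub_nonpos.2 (log_le_log hx h)) (sub_nonpos.2 (hv h))
  · exact mul_nonneg (sub_nonneg.2 (log_le_log hy h)) (sub_nonneg.2 (hv h))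

lemma chebyshevKernel_log_nonneg_ae (hv : Monotone v) (hw : ∀ x ∈ Ioc 0 1, 0 ≤ w x) :
    0 ≤ᵐ[(volume.restrict (Ioc (0:ℝ) 1)).prod (volume.restrict (Ioc 0 1))]
      chebyshevKernel log v w := by
  rw [Measure.prod_restrict]
  refine ae_restrict_of_forall_mem (measurableSet_Ioc.prod measurableSet_Ioc) ?_
  rintro ⟨x, y⟩ ⟨hx, hy⟩
  exact mul_nonneg (sub_log_mul_sub_nonneg hv hx.1 hy.1) (mul_nonneg (hw x hx) (hw y hy))

lemma measure_support_chebyshevKernel_log_pos (hv : StrictMono v) (hw : ∀ x ∈ Ioc 0 1, 0 < w x) :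
    0 < (volume.restrict (Ioc (0:ℝ) 1)).prod (volume.restrict (Ioc 0 1))
      (Function.support (chebyshevKernel log v w)) := by
  have hIoo : ∀ a b : ℝ, 0 ≤ a → a < b → b ≤ 1 → 0 < volume.restrict (Ioc 0 1) (Ioo a b) :=
    fun a b ha hab hb ↦ by
      rw [Measure.restrict_apply measurableSet_Ioo,
        inter_eq_left.2 (Ioo_subset_Ioc_self.trans (Ioc_subset_Ioc ha hb)), Real.volume_Ioo]
      simpa using hab
  have hsub : Ioo 0 (1 / 2) ×ˢ Ioo (1 / 2) 1 ⊆ Function.support (chebyshevKernel log v w) := by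
    rintro ⟨x, y⟩ ⟨hx, hy⟩
    have hx' : x ∈ Ioc 0 1 := ⟨hx.1, by linarith [hx.2]⟩
    have hy' : y ∈ Ioc 0 1 := ⟨by linarith [hy.1], hy.2.le⟩
    have hxy : x < y := by linarith [hx.2, hy.1]
    exact (mul_pos (sub_log_mul_sub_pos hv hx.1 hy'.1 hxy.ne)
      (mul_pos (hw x hx') (hw y hy'))).ne'
  refine lt_of_lt_of_le ?_ (measure_mono hsub)
  rw [Measure.prod_prod]
  exact ENNReal.mul_pos (hIoo 0 _ le_rfl (by norm_num) (by norm_num)).ne'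
    (hIoo _ 1 (by norm_num) (by norm_num) le_rfl).ne'

end LogKernel

section Xi

variable {s : ℝ}

lemma continuousOn_one_sub_div_one_add :
    ContinuousOn (fun x : ℝ ↦ (1 - x) / (1 + x)) (Icc 0 1) := by
  fun_prop (disch := intro x hx; linarith [hx.1])

lemma intervalIntegrable_ξ₀_integrand (hs : 0 < s) :
    IntervalIntegrable (fun x ↦ (1 - x) / (1 + x) * (s * x ^ (s - 1))) volume 0 1 :=
  ((intervalIntegral.intervalIntegrable_rpow' (by linarith)).const_mul s).continuousOn_mul
    (by rw [uIcc_of_le zero_le_one]; exact continuousOn_one_sub_div_one_add)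

lemma continuousOn_two_div_one_add_sq : ContinuousOn (fun x : ℝ ↦ 2 / (1 + x) ^ 2) (Icc 0 1) :=
  continuousOn_const.div (by fun_prop) fun x hx ↦ pow_ne_zero 2 (by linarith [hx.1])

lemma continuousOn_one_add_inv : ContinuousOn (fun x : ℝ ↦ (1 + x)⁻¹) (Icc 0 1) := by
  fun_prop (disch := intro x hx; linarith [hx.1])

/-- Integration by parts: `(1 - x) / (1 + x) * x ^ s` vanishes at `0` and `1`. -/
lemma ξ₀_eq_integral (hs : 0 < s) : ξ₀ s = ∫ x in (0:ℝ)..1, x ^ s * (2 / (1 + x) ^ 2) := by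
  have hB := intervalIntegrable_rpow_mul continuousOn_two_div_one_add_sq (by linarith : -1 < s)
  have hderiv : ∀ x ∈ Ioo (0:ℝ) 1, HasDerivAt (fun y ↦ (1 - y) / (1 + y) * y ^ s)
      ((1 - x) / (1 + x) * (s * x ^ (s - 1)) - x ^ s * (2 / (1 + x) ^ 2)) x := by
    intro x hx
    have hx₁ : 1 + x ≠ 0 := by linarith [hx.1]
    refine ((((hasDerivAt_id x).const_sub 1).div ((hasDerivAt_id x).const_add 1) hx₁).mul
      (hasDerivAt_rpow_const (Or.inl hx.1.ne'))).congr_deriv ?_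
    simp only [Pi.div_apply, id_eq]
    field_simp
    ring
  have hFTC := intervalIntegral.integral_eq_sub_of_hasDerivAt_of_le zero_le_one
    (by fun_prop (disch := first | exact fun x hx ↦ by linarith [hx.1] | exact hs.le)) hderiv
    ((intervalIntegrable_ξ₀_integrand hs).sub hB)
  rw [intervalIntegral.integral_sub (intervalIntegrable_ξ₀_integrand hs) hB] at hFTC
  simp only [sub_self, zero_div, zero_mul, zero_rpow hs.ne', mul_zero] at hFTC
  exact sub_eq_zero.1 hFTC

lemma rpow_mul_two_div_one_add_sq_pos {x : ℝ} (hx : 0 < x) : 0 < x ^ s * (2 / (1 + x) ^ 2) :=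
  mul_pos (rpow_pos_of_pos hx s) (div_pos two_pos (pow_pos (by linarith) 2))

lemma ξ₀_pos (hs : 0 < s) : 0 < ξ₀ s := by
  rw [ξ₀_eq_integral hs]
  exact intervalIntegral.intervalIntegral_pos_of_pos_on
    (intervalIntegrable_rpow_mul continuousOn_two_div_one_add_sq (by linarith))
    (fun x hx ↦ rpow_mul_two_div_one_add_sq_pos hx.1) zero_lt_one

noncomputable def invOneAddMoment (s : ℝ) : ℝ := ∫ x in (0:ℝ)..1, x ^ s * (1 + x)⁻¹

lemma one_sub_ξ₀ (hs : 0 < s) : 1 - ξ₀ s = 2 * s * invOneAddMoment s := by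
  have hmass : ∫ x in (0:ℝ)..1, s * x ^ (s - 1) = 1 := by
    rw [intervalIntegral.integral_const_mul, integral_rpow (Or.inl (by linarith)), sub_add_cancel,
      one_rpow, zero_rpow hs.ne', sub_zero]
    field_simp
  rw [← hmass, ξ₀, ← intervalIntegral.integral_sub
    ((intervalIntegral.intervalIntegrable_rpow' (by linarith)).const_mul s)
    (intervalIntegrable_ξ₀_integrand hs), invOneAddMoment, ← intervalIntegral.integral_const_mul]
  refine intervalIntegral.integral_congr_ae (Filter.Eventually.of_forall fun x hx ↦ ?_)
  rw [uIoc_of_le zero_le_one] at hx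
  have hx₀ : x ≠ 0 := hx.1.ne'
  have hx₁ : 1 + x ≠ 0 := by linarith [hx.1]
  rw [rpow_sub_one hx₀]
  field_simp
  ring

lemma ξ₀'_eq_integral : ξ₀' s = ∫ x in (0:ℝ)..1, x ^ s * log x * (2 / (1 + x) ^ 2) := by
  rw [ξ₀']
  congr 1
  funext x
  ring

lemma hasDerivAt_ξ₀ (hs : 0 < s) : HasDerivAt ξ₀ (ξ₀' s) s := by
  have hξ₀ : (fun t ↦ ∫ x in (0:ℝ)..1, x ^ t * (2 / (1 + x) ^ 2)) =ᶠ[nhds s] ξ₀ :=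
    Filter.eventually_of_mem (Ioi_mem_nhds hs) fun t ht ↦ (ξ₀_eq_integral ht).symm
  exact ((hasDerivAt_integral_rpow_mul continuousOn_two_div_one_add_sq
    (by linarith)).congr_of_eventuallyEq hξ₀.symm).congr_deriv ξ₀'_eq_integral.symm

lemma ξ₀'_eq_invOneAddMoment (hs : 0 < s) : ξ₀' s = -2 * invOneAddMoment s
    - 2 * s * ∫ x in (0:ℝ)..1, x ^ s * log x * (1 + x)⁻¹ := by
  have hmoment : HasDerivAt (fun t ↦ 2 * t * invOneAddMoment t)
      (2 * invOneAddMoment s + 2 * s * ∫ x in (0:ℝ)..1, x ^ s * log x * (1 + x)⁻¹) s := by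
    refine (((hasDerivAt_id' s).const_mul 2).mul
      (hasDerivAt_integral_rpow_mul continuousOn_one_add_inv (by linarith))).congr_deriv ?_
    rw [invOneAddMoment]
    ring
  have hone_sub : (fun t ↦ 1 - ξ₀ t) =ᶠ[nhds s] fun t ↦ 2 * t * invOneAddMoment t :=
    Filter.eventually_of_mem (Ioi_mem_nhds hs) fun t ht ↦ one_sub_ξ₀ ht
  have := ((hasDerivAt_ξ₀ hs).const_sub 1).unique (hmoment.congr_of_eventuallyEq hone_sub)
  linarith

lemma invOneAddMoment_mul_ξ₀'_lt (hs : 0 < s) :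
    invOneAddMoment s * ξ₀' s < (∫ x in (0:ℝ)..1, x ^ s * log x * (1 + x)⁻¹) * ξ₀ s := by
  set w : ℝ → ℝ := fun x ↦ x ^ s * (2 / (1 + x) ^ 2)
  have hs₁ : -1 < s := by linarith
  have hw := intervalIntegrable_rpow_mul continuousOn_two_div_one_add_sq hs₁
  have hlw := intervalIntegrable_rpow_mul_log_mul continuousOn_two_div_one_add_sq hs₁
  have hA := intervalIntegrable_rpow_mul continuousOn_one_add_inv hs₁
  have hA' := intervalIntegrable_rpow_mul_log_mul continuousOn_one_add_inv hs₁
  have hvw : EqOn (fun x ↦ 2 * (x ^ s * (1 + x)⁻¹)) (fun x ↦ (1 + x) * w x) (Ioc 0 1) :=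
    fun x hx ↦ by
      have : 1 + x ≠ 0 := by linarith [hx.1]
      simp only [w]
      field_simp
  have huvw : EqOn (fun x ↦ 2 * (x ^ s * log x * (1 + x)⁻¹)) (fun x ↦ log x * (1 + x) * w x)
      (Ioc 0 1) := fun x hx ↦ by
    have : 1 + x ≠ 0 := by linarith [hx.1]
    simp only [w]
    field_simp
  have huw : (fun x ↦ x ^ s * log x * (2 / (1 + x) ^ 2)) = fun x ↦ log x * w x := by
    funext x; ring
  have hcheb := integral_mul_integral_lt_of_chebyshevKernel (μ := volume.restrict (Ioc 0 1))
    (u := log) (v := fun x ↦ 1 + x) hw.1 (huw ▸ hlw.1)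
    (IntegrableOn.congr_fun (hA.1.const_mul 2) hvw measurableSet_Ioc)
    (IntegrableOn.congr_fun (hA'.1.const_mul 2) huvw measurableSet_Ioc) ?_ ?_
  · rw [← setIntegral_congr_fun measurableSet_Ioc hvw,
      ← setIntegral_congr_fun measurableSet_Ioc huvw, ← huw, integral_const_mul,
      integral_const_mul] at hcheb
    simp only [← intervalIntegral.integral_of_le zero_le_one, ← ξ₀_eq_integral hs] at hcheb
    rw [invOneAddMoment, ξ₀'_eq_integral]
    linarith
  · exact chebyshevKernel_log_nonneg_ae (monotone_id.const_add 1) fun x hx ↦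
      (rpow_mul_two_div_one_add_sq_pos hx.1).le
  · exact measure_support_chebyshevKernel_log_pos (strictMono_id.const_add 1) fun x hx ↦
      rpow_mul_two_div_one_add_sq_pos hx.1

lemma one_sub_ξ₀_mul_ξ₀_add_mul_ξ₀'_neg (hs : 0 < s) : (1 - ξ₀ s) * ξ₀ s + s * ξ₀' s < 0 := by
  set A := invOneAddMoment s
  set A' := ∫ x in (0:ℝ)..1, x ^ s * log x * (1 + x)⁻¹
  have h₁ : 1 - ξ₀ s = 2 * s * A := one_sub_ξ₀ hs
  have h₂ : ξ₀' s = -2 * A - 2 * s * A' := ξ₀'_eq_invOneAddMoment hs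
  have hchebyshev : A * ξ₀' s < A' * ξ₀ s := invOneAddMoment_mul_ξ₀'_lt hs
  have hg : (1 - ξ₀ s) * ξ₀ s + s * ξ₀' s = -2 * s ^ 2 * (A' * ξ₀ s - A * ξ₀' s) := by
    linear_combination (ξ₀ s - 2 * s * A - 2 * s ^ 2 * A') * h₁ + (s - 2 * s ^ 2 * A) * h₂
  rw [hg]
  exact mul_neg_of_neg_of_pos (by nlinarith) (sub_pos.2 hchebyshev)

lemma hasDerivAt_ξ₃ (hs : 0 < s) :
    HasDerivAt ξ₃ (-2 * ((1 - ξ₀ s) * ξ₀ s + s * ξ₀' s) / (2 * s * ξ₀ s) ^ 2) s := by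
  have hden : HasDerivAt (fun t ↦ 2 * t * ξ₀ t) (2 * ξ₀ s + 2 * s * ξ₀' s) s := by
    refine (((hasDerivAt_id' s).const_mul 2).mul (hasDerivAt_ξ₀ hs)).congr_deriv ?_
    ring
  have hξ₀ := ξ₀_pos hs
  refine (((hasDerivAt_ξ₀ hs).const_sub 1).div hden (by positivity)).congr_deriv ?_
  ring

end Xi

theorem g_neg_and_xi3_strictMono :
    (∀ s : ℝ, 0 < s → (1 - ξ₀ s) * ξ₀ s + s * ξ₀' s < 0) ∧
    StrictMonoOn ξ₃ (Set.Ioi 0) := by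
  refine ⟨fun s hs ↦ one_sub_ξ₀_mul_ξ₀_add_mul_ξ₀'_neg hs, ?_⟩
  refine strictMonoOn_of_hasDerivWithinAt_pos (convex_Ioi 0)
    (fun s hs ↦ (hasDerivAt_ξ₃ hs).continuousAt.continuousWithinAt)
    (fun s hs ↦ (hasDerivAt_ξ₃ (interior_subset hs)).hasDerivWithinAt) fun s hs ↦ ?_
  have hs : 0 < s := interior_subset hs
  have := ξ₀_pos hs
  exact div_pos (by linarith [one_sub_ξ₀_mul_ξ₀_add_mul_ξ₀'_neg hs]) (by positivity)
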